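/- Assume φ ∈ (0,1), ω > 0, μ > 0, b > 0 and r := bφ − μ(1−φ) > 0; set ρ* := (1 − e^{μ(1−φ)ω − bφω})/(1 − e^{−bφω}). Let A = (a_{ij}) be a real 3×3 matrix and suppose u : ℝ → ℝ³ satisfies the Lotka–Volterra competition system at every t ∈ ℝ, is T-periodic for some T > 0, has all components strictly positive, and suppose (r ω)/(b T) is irrational. Then for every s ∈ ℝ there exists a continuous v : [0, ∞) → ℝ³ with v(0) = ρ*·u(s) such that, for every natural number k, each component of v has derivative −μ·v_i(t) at every t ∈ (kω, kω + (1−φ)ω) and v satisfies the Lotka–Volterra competition system at every t ∈ (kω + (1−φ)ω, (k+1)ω); moreover v(kω) = ρ*·u(s + k·(r/b)ω) for all k ∈ ℕ, and the set {v(kω) : k ∈ ℕ} is dense in ρ*·(range of u). (This produces quasi-periodic positive solutions of the seasonal system.) -/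

import Mathlib

/-!
For the equal-rate system, if `u` is a solution, `ρ' = bρ(1 - ρ)` and `θ' = ρ`, then `ρ(t) u(θ(t))`
is again a solution. Starting from `ρ* u(s)`, a season multiplies by `l = e^{-μ(1-φ)ω}` during the
death phase and then runs the logistic from `l ρ*`, which by the choice of `ρ*` returns exactly to
`ρ*` after time `φω` while the clock of `u` advances by `rω/b`. Hence `v(kω) = ρ* u(s + k rω/b)`,
and as `u` is `T`-periodic with `rω/(bT)` irrational, these points are dense in `ρ* · range u`
(irrational rotations of `ℝ/Tℤ` have dense forward orbits).
-/

open Set Function Real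

section PeriodicExtension
variable {X : Type*} {ω : ℝ} (hω : 0 < ω)

noncomputable def periodicExtension (f : ℝ → X) (t : ℝ) : X := f (toIcoMod hω 0 t)

variable {hω}

theorem periodicExtension_of_mem_Ico {f : ℝ → X} {t : ℝ} {k : ℤ}
    (ht : t ∈ Ico (k * ω) ((k + 1) * ω)) : periodicExtension hω f t = f (t - k * ω) := by
  have hmem : t - k * ω ∈ Ico 0 (0 + ω) := by
    constructor <;> [linarith [ht.1]; linarith [ht.2]]
  rw [periodicExtension, ← toIcoMod_sub_zsmul hω 0 t k, zsmul_eq_mul, (toIcoMod_eq_self hω).2 hmem]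

theorem continuous_periodicExtension [TopologicalSpace X] {f : ℝ → X}
    (hf : ContinuousOn f (Icc 0 ω)) (hf0 : f 0 = f ω) :
    Continuous (periodicExtension hω f) := by
  have : Fact (0 < ω) := ⟨hω⟩
  exact (AddCircle.liftIco_zero_continuous hf0 hf).comp (AddCircle.continuous_mk' ω)

end PeriodicExtension

theorem Function.Periodic.mem_closure_range_add_nat_mul {X : Type*} [TopologicalSpace X]
    {f : ℝ → X} {T α : ℝ} (hT : 0 < T) (hf : Continuous f) (hper : Periodic f T)
    (hirr : Irrational (α / T)) (s t : ℝ) :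
    f t ∈ closure (range fun k : ℕ => f (s + k * α)) := by
  have : Fact (0 < T) := ⟨hT⟩
  have hlift : Continuous hper.lift := hf.quotient_liftOn' _
  have hdense : DenseRange fun k : ℕ => (s : AddCircle T) + k • (α : AddCircle T) :=
    (Homeomorph.addLeft (s : AddCircle T)).surjective.denseRange.comp
      (denseRange_zsmul_iff_nsmul.1 (AddCircle.denseRange_zsmul_coe_iff.2 hirr)) (by fun_prop)
  have hcomp : (hper.lift ∘ fun k : ℕ => (s : AddCircle T) + k • (α : AddCircle T)) =
      fun k : ℕ => f (s + k * α) := by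
    funext k
    rw [comp_apply, ← AddCircle.coe_nsmul, ← AddCircle.coe_add, nsmul_eq_mul]
    rfl
  rw [← hcomp, range_comp]
  exact hlift.range_subset_closure_image_dense hdense ⟨t, rfl⟩

def lotkaVolterra {ι : Type*} [Fintype ι] (b : ℝ) (A : Matrix ι ι ℝ) (x : ι → ℝ) (i : ι) : ℝ :=
  x i * (b - ∑ j, A i j * x j)

theorem HasDerivAt.lotkaVolterra_mul_comp {ι : Type*} [Fintype ι] {b : ℝ} {A : Matrix ι ι ℝ}
    {u : ℝ → ι → ℝ} {ρ θ : ℝ → ℝ} {t : ℝ}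
    (hu : ∀ i, HasDerivAt (fun s => u s i) (lotkaVolterra b A (u (θ t)) i) (θ t))
    (hρ : HasDerivAt ρ (b * ρ t * (1 - ρ t)) t) (hθ : HasDerivAt θ (ρ t) t) (i : ι) :
    HasDerivAt (fun τ => ρ τ * u (θ τ) i)
      (lotkaVolterra b A (fun j => ρ t * u (θ t) j) i) t := by
  refine (hρ.mul ((hu i).comp t hθ)).congr_deriv ?_
  have hsum : ∑ j, A i j * (ρ t * u (θ t) j) = ρ t * ∑ j, A i j * u (θ t) j := by
    rw [Finset.mul_sum]
    exact Finset.sum_congr rfl fun j _ => by ring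
  simp only [lotkaVolterra, hsum, comp_apply]
  ring

noncomputable def logistic (b c τ : ℝ) : ℝ := c * exp (b * τ) / (c * exp (b * τ) + (1 - c))

noncomputable def logisticIntegral (b c τ : ℝ) : ℝ := log (c * exp (b * τ) + (1 - c)) / b

section Logistic
variable {b c : ℝ}

theorem logistic_denom_pos (hc0 : 0 < c) (hc1 : c ≤ 1) (τ : ℝ) : 0 < c * exp (b * τ) + (1 - c) := by
  have := exp_pos (b * τ)
  positivity

@[simp] theorem logistic_zero : logistic b c 0 = c := by simp [logistic]

@[simp] theorem logisticIntegral_zero : logisticIntegral b c 0 = 0 := by simp [logisticIntegral]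

theorem hasDerivAt_logistic (hc0 : 0 < c) (hc1 : c ≤ 1) (τ : ℝ) :
    HasDerivAt (logistic b c) (b * logistic b c τ * (1 - logistic b c τ)) τ := by
  have hN : HasDerivAt (fun τ => c * exp (b * τ)) (c * exp (b * τ) * b) τ := by
    simpa [mul_assoc] using ((hasDerivAt_id τ).const_mul b).exp.const_mul c
  have hD := logistic_denom_pos hc0 hc1 (b := b) τ
  refine (hN.div (hN.add_const (1 - c)) hD.ne').congr_deriv ?_
  simp only [logistic]
  field_simp

theorem hasDerivAt_logisticIntegral (hb : b ≠ 0) (hc0 : 0 < c) (hc1 : c ≤ 1) (τ : ℝ) :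
    HasDerivAt (logisticIntegral b c) (logistic b c τ) τ := by
  have hN : HasDerivAt (fun τ => c * exp (b * τ) + (1 - c)) (c * exp (b * τ) * b) τ := by
    simpa [mul_assoc] using (((hasDerivAt_id τ).const_mul b).exp.const_mul c).add_const (1 - c)
  refine ((hN.log (logistic_denom_pos hc0 hc1 τ).ne').div_const b).congr_deriv ?_
  simp only [logistic]
  field_simp

end Logistic

section PeriodicRescale
variable {E : Type*} [AddCommGroup E] [Module ℝ E] {ω : ℝ} (hω : 0 < ω)

/-- The clock `θ` gains `α` over each period; splitting off the linear drift `α / ω * t` leaves an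
`ω`-periodic correction, so the glued function is continuous. -/
noncomputable def periodicRescale (ρ θ : ℝ → ℝ) (α s : ℝ) (u : ℝ → E) (t : ℝ) : E :=
  periodicExtension hω ρ t • u (s + α / ω * t + periodicExtension hω (fun τ => θ τ - α / ω * τ) t)

variable {hω} {ρ θ : ℝ → ℝ} {α s : ℝ} {u : ℝ → E}

theorem periodicRescale_of_mem_Ico {t : ℝ} {k : ℤ} (ht : t ∈ Ico (k * ω) ((k + 1) * ω)) :
    periodicRescale hω ρ θ α s u t = ρ (t - k * ω) • u (s + k * α + θ (t - k * ω)) := by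
  rw [periodicRescale, periodicExtension_of_mem_Ico ht, periodicExtension_of_mem_Ico ht]
  congr 2
  field_simp
  ring

theorem continuous_periodicRescale [TopologicalSpace E] [ContinuousSMul ℝ E]
    (hρ : ContinuousOn ρ (Icc 0 ω)) (hθ : ContinuousOn θ (Icc 0 ω))
    (hρω : ρ 0 = ρ ω) (hθω : θ ω = θ 0 + α) (hu : Continuous u) :
    Continuous (periodicRescale hω ρ θ α s u) := by
  have hθ' : ContinuousOn (fun τ => θ τ - α / ω * τ) (Icc 0 ω) := by fun_prop
  refine (continuous_periodicExtension hρ hρω).smul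
    (hu.comp ((by fun_prop : Continuous fun t => s + α / ω * t).add
      (continuous_periodicExtension hθ' ?_)))
  rw [hθω, div_mul_cancel₀ α hω.ne']
  ring

end PeriodicRescale

section Seasonal
variable {b μ d g ρ : ℝ}

noncomputable def seasonalFixedPoint (b μ d g : ℝ) : ℝ :=
  (1 - exp (μ * d - b * g)) / (1 - exp (-(b * g)))

/-- The logistic started at `e^{-μd} ρ*` is back at `ρ*` after time `g`, and its integral is then
`(bg - μd)/b`: both facts are read off this identity. -/
theorem seasonalFixedPoint_spec (hbg : b * g ≠ 0) :
    exp (-(μ * d)) * seasonalFixedPoint b μ d g * exp (b * g) +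
      (1 - exp (-(μ * d)) * seasonalFixedPoint b μ d g) = exp (b * g - μ * d) := by
  have hE : exp (b * g) ≠ 1 := by simpa using hbg
  have hE' : exp (b * g) - 1 ≠ 0 := sub_ne_zero.2 hE
  rw [seasonalFixedPoint, sub_eq_add_neg (b * g), sub_eq_add_neg (μ * d), exp_add, exp_add, exp_neg,
    exp_neg]
  field_simp
  ring

theorem seasonalFixedPoint_mem_Ioc (hbg : 0 < b * g) (hμd : 0 ≤ μ * d) (hr : μ * d < b * g) :
    exp (-(μ * d)) * seasonalFixedPoint b μ d g ∈ Ioc 0 1 := by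
  have hspec := seasonalFixedPoint_spec (μ := μ) (d := d) hbg.ne'
  have hE : 1 < exp (b * g) := one_lt_exp_iff.2 hbg
  have hF : 1 < exp (b * g - μ * d) := one_lt_exp_iff.2 (by linarith)
  have hFE : exp (b * g - μ * d) ≤ exp (b * g) := exp_le_exp.2 (by linarith)
  constructor <;> nlinarith

/-- Over one season `[0, d + g]` the seasonal solution through `ρ • u s` is
`seasonalScale b μ d ρ τ • u (s + seasonalClock b μ d ρ τ)`. -/
noncomputable def seasonalScale (b μ d ρ τ : ℝ) : ℝ :=
  if τ ≤ d then ρ * exp (-(μ * τ)) else logistic b (exp (-(μ * d)) * ρ) (τ - d)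

noncomputable def seasonalClock (b μ d ρ τ : ℝ) : ℝ :=
  if τ ≤ d then 0 else logisticIntegral b (exp (-(μ * d)) * ρ) (τ - d)

theorem seasonalScale_zero (hd : 0 ≤ d) : seasonalScale b μ d ρ 0 = ρ := by
  simp [seasonalScale, hd]

theorem seasonalClock_zero (hd : 0 ≤ d) : seasonalClock b μ d ρ 0 = 0 := by
  simp [seasonalClock, hd]

theorem seasonalScale_add_fixedPoint (hg : 0 < g) (hbg : b * g ≠ 0) :
    seasonalScale b μ d (seasonalFixedPoint b μ d g) (d + g) = seasonalFixedPoint b μ d g := by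
  have hspec := seasonalFixedPoint_spec (μ := μ) (d := d) hbg
  simp only [seasonalScale, add_le_iff_nonpos_right, not_le.2 hg, if_false, add_sub_cancel_left,
    logistic, hspec]
  rw [div_eq_iff (exp_pos _).ne', sub_eq_add_neg (b * g), exp_add]
  ring

theorem seasonalClock_add_fixedPoint (hg : 0 < g) (hbg : b * g ≠ 0) :
    seasonalClock b μ d (seasonalFixedPoint b μ d g) (d + g) = (b * g - μ * d) / b := by
  simp only [seasonalClock, add_le_iff_nonpos_right, not_le.2 hg, if_false, add_sub_cancel_left,
    logisticIntegral, seasonalFixedPoint_spec hbg, log_exp]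

theorem continuous_seasonalScale (hc : exp (-(μ * d)) * ρ ∈ Ioc 0 1) :
    Continuous (seasonalScale b μ d ρ) := by
  have hlog : Continuous (logistic b (exp (-(μ * d)) * ρ)) := continuous_iff_continuousAt.2
    fun τ => (hasDerivAt_logistic hc.1 hc.2 τ).continuousAt
  refine Continuous.if_le (by fun_prop) (hlog.comp (by fun_prop)) continuous_id continuous_const ?_
  rintro τ rfl
  simp [mul_comm]

theorem continuous_seasonalClock (hc : exp (-(μ * d)) * ρ ∈ Ioc 0 1) :
    Continuous (seasonalClock b μ d ρ) := by
  set c := exp (-(μ * d)) * ρ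
  have hlog : Continuous (logisticIntegral b c) :=
    ((by fun_prop : Continuous fun τ => c * exp (b * τ) + (1 - c)).log
      fun τ => (logistic_denom_pos hc.1 hc.2 τ).ne').div_const b
  refine Continuous.if_le continuous_const (hlog.comp (by fun_prop)) continuous_id
    continuous_const ?_
  rintro τ rfl
  simp

end Seasonal

section SeasonalSolution
variable {E : Type*} [AddCommGroup E] [Module ℝ E] {ω : ℝ} (hω : 0 < ω)

noncomputable def seasonalSolution (b μ d ρ α s : ℝ) (u : ℝ → E) : ℝ → E :=
  periodicRescale hω (seasonalScale b μ d ρ) (seasonalClock b μ d ρ) α s u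

variable {hω} {b μ d ρ α s t : ℝ} {u : ℝ → E} {k : ℤ}

theorem seasonalSolution_of_death (hdω : d < ω) (ht : t ∈ Icc (k * ω) (k * ω + d)) :
    seasonalSolution hω b μ d ρ α s u t = (ρ * exp (-(μ * (t - k * ω)))) • u (s + k * α) := by
  rw [seasonalSolution, periodicRescale_of_mem_Ico ⟨ht.1, by linarith [ht.2]⟩]
  simp [seasonalScale, seasonalClock, show t - k * ω ≤ d by linarith [ht.2]]

theorem seasonalSolution_of_growth (hd : 0 ≤ d) (ht : t ∈ Ioo (k * ω + d) ((k + 1) * ω)) :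
    seasonalSolution hω b μ d ρ α s u t =
      logistic b (exp (-(μ * d)) * ρ) (t - (k * ω + d)) •
        u (s + k * α + logisticIntegral b (exp (-(μ * d)) * ρ) (t - (k * ω + d))) := by
  rw [seasonalSolution, periodicRescale_of_mem_Ico ⟨by linarith [ht.1], ht.2⟩]
  simp [seasonalScale, seasonalClock, show ¬ t - k * ω ≤ d by linarith [ht.1], sub_sub]

theorem continuous_seasonalSolution [TopologicalSpace E] [ContinuousSMul ℝ E] {g : ℝ}
    (hdg : d + g = ω) (hd : 0 ≤ d) (hg : 0 < g) (hb : 0 < b) (hμd : 0 ≤ μ * d)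
    (hr : μ * d < b * g) (hu : Continuous u) :
    Continuous
      (seasonalSolution hω b μ d (seasonalFixedPoint b μ d g) ((b * g - μ * d) / b) s u) := by
  have hbg : 0 < b * g := mul_pos hb hg
  have hc := seasonalFixedPoint_mem_Ioc hbg hμd hr
  subst hdg
  refine continuous_periodicRescale (continuous_seasonalScale hc).continuousOn
    (continuous_seasonalClock hc).continuousOn ?_ ?_ hu
  · rw [seasonalScale_zero hd, seasonalScale_add_fixedPoint hg hbg.ne']
  · rw [seasonalClock_zero hd, seasonalClock_add_fixedPoint hg hbg.ne', zero_add]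

end SeasonalSolution

section SeasonalLotkaVolterra
variable {ι : Type*} {u : ℝ → ι → ℝ} {ω : ℝ} {hω : 0 < ω} {b μ d ρ α s t : ℝ} {k : ℤ}

theorem hasDerivAt_seasonalSolution_of_death (hdω : d < ω) (ht : t ∈ Ioo (k * ω) (k * ω + d))
    (i : ι) :
    HasDerivAt (fun τ => seasonalSolution hω b μ d ρ α s u τ i)
      (-μ * seasonalSolution hω b μ d ρ α s u t i) t := by
  have heq : ∀ τ ∈ Ioo (k * ω) (k * ω + d),
      seasonalSolution hω b μ d ρ α s u τ i = ρ * exp (-(μ * (τ - k * ω))) * u (s + k * α) i :=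
    fun τ hτ => by rw [seasonalSolution_of_death hdω (Ioo_subset_Icc_self hτ)]; rfl
  have hderiv : HasDerivAt (fun τ => ρ * exp (-(μ * (τ - k * ω))) * u (s + k * α) i)
      (-μ * (ρ * exp (-(μ * (t - k * ω))) * u (s + k * α) i)) t := by
    have := ((((hasDerivAt_id' t).sub_const (k * ω)).const_mul μ).fun_neg.exp.const_mul ρ).mul_const
      (u (s + k * α) i)
    exact this.congr_deriv (by ring)
  rw [heq t ht]
  exact hderiv.congr_of_eventuallyEq (Filter.eventually_of_mem (Ioo_mem_nhds ht.1 ht.2) heq)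

theorem hasDerivAt_seasonalSolution_of_growth [Fintype ι] {A : Matrix ι ι ℝ} (hb : b ≠ 0)
    (hd : 0 ≤ d) (hc : exp (-(μ * d)) * ρ ∈ Ioc 0 1)
    (hu : ∀ t i, HasDerivAt (fun s => u s i) (lotkaVolterra b A (u t) i) t)
    (ht : t ∈ Ioo (k * ω + d) ((k + 1) * ω)) (i : ι) :
    HasDerivAt (fun τ => seasonalSolution hω b μ d ρ α s u τ i)
      (lotkaVolterra b A (seasonalSolution hω b μ d ρ α s u t) i) t := by
  set c := exp (-(μ * d)) * ρ
  have heq : ∀ τ ∈ Ioo (k * ω + d) ((k + 1) * ω), seasonalSolution hω b μ d ρ α s u τ =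
      fun j => logistic b c (τ - (k * ω + d)) *
        u (s + k * α + logisticIntegral b c (τ - (k * ω + d))) j :=
    fun τ hτ => seasonalSolution_of_growth hd hτ
  have hρ := (hasDerivAt_logistic (b := b) hc.1 hc.2 (t - (k * ω + d))).comp_sub_const t (k * ω + d)
  have hθ := ((hasDerivAt_logisticIntegral hb hc.1 hc.2 (t - (k * ω + d))).comp_sub_const t
    (k * ω + d)).const_add (s + k * α)
  rw [heq t ht]
  exact (HasDerivAt.lotkaVolterra_mul_comp (fun j => hu _ j) hρ hθ i).congr_of_eventuallyEq
    (Filter.eventually_of_mem (Ioo_mem_nhds ht.1 ht.2) fun τ hτ => congrFun (heq τ hτ) i)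

end SeasonalLotkaVolterra

theorem stmt_12_general (φ ω μ b r ρs : ℝ)
    (hφ0 : 0 < φ) (hφ1 : φ < 1) (hω : 0 < ω) (hμ : 0 < μ) (hb : 0 < b)
    (hr : r = b * φ - μ * (1 - φ)) (hrpos : 0 < r)
    (hρs : ρs = (1 - Real.exp (μ * (1 - φ) * ω - b * φ * ω)) /
      (1 - Real.exp (-(b * φ * ω))))
    (A : Matrix (Fin 3) (Fin 3) ℝ) (u : ℝ → Fin 3 → ℝ) (T : ℝ) (hT : 0 < T)
    (hu : ∀ t : ℝ, ∀ i : Fin 3,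
      HasDerivAt (fun s => u s i) (u t i * (b - ∑ j : Fin 3, A i j * u t j)) t)
    (hper : ∀ t : ℝ, u (t + T) = u t)
    (hirr : Irrational (r * ω / (b * T))) :
    ∀ s : ℝ, ∃ v : ℝ → Fin 3 → ℝ,
      ContinuousOn v (Set.Ici 0) ∧
      (∀ i : Fin 3, v 0 i = ρs * u s i) ∧
      (∀ k : ℕ, ∀ t ∈ Set.Ioo ((k : ℝ) * ω) ((k : ℝ) * ω + (1 - φ) * ω), ∀ i : Fin 3,
        HasDerivAt (fun τ => v τ i) (-μ * v t i) t) ∧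
      (∀ k : ℕ, ∀ t ∈ Set.Ioo ((k : ℝ) * ω + (1 - φ) * ω) (((k : ℝ) + 1) * ω), ∀ i : Fin 3,
        HasDerivAt (fun τ => v τ i) (v t i * (b - ∑ j : Fin 3, A i j * v t j)) t) ∧
      (∀ k : ℕ, ∀ i : Fin 3, v ((k : ℝ) * ω) i = ρs * u (s + (k : ℝ) * (r / b * ω)) i) ∧
      (∀ t : ℝ, (fun i : Fin 3 => ρs * u t i) ∈
        closure (Set.range fun k : ℕ => v ((k : ℝ) * ω))) := by
  intro s
  have hd : 0 ≤ (1 - φ) * ω := mul_nonneg (by linarith) hω.le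
  have hg : 0 < φ * ω := mul_pos hφ0 hω
  have hrd : μ * ((1 - φ) * ω) < b * (φ * ω) := by nlinarith
  have hα : (b * (φ * ω) - μ * ((1 - φ) * ω)) / b = r / b * ω := by rw [hr]; ring
  have hρ : ρs = seasonalFixedPoint b μ ((1 - φ) * ω) (φ * ω) := by
    rw [hρs, seasonalFixedPoint]; ring_nf
  have hc := seasonalFixedPoint_mem_Ioc (mul_pos hb hg) (by positivity) hrd
  have hucont : Continuous u := continuous_pi fun i =>
    continuous_iff_continuousAt.2 fun t => (hu t i).continuousAt
  have hv := continuous_seasonalSolution (hω := hω) (s := s) (by ring) hd hg hb (by positivity)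
    hrd hucont
  rw [hα, ← hρ] at hv
  rw [← hρ] at hc
  set v := seasonalSolution hω b μ ((1 - φ) * ω) ρs (r / b * ω) s u
  have hgrid : ∀ k : ℕ, v (k * ω) = ρs • u (s + k * (r / b * ω)) := fun k => by
    simpa using seasonalSolution_of_death (k := k) (by linarith) ⟨le_rfl, by linarith⟩
  refine ⟨v, hv.continuousOn, fun i => by simpa using congrFun (hgrid 0) i,
    fun k t ht i =>
      hasDerivAt_seasonalSolution_of_death (k := k) (by linarith) (by exact_mod_cast ht) i,
    fun k t ht i =>
      hasDerivAt_seasonalSolution_of_growth (k := k) hb.ne' hd hc hu (by exact_mod_cast ht) i,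
    fun k i => congrFun (hgrid k) i, fun t => ?_⟩
  simp only [hgrid]
  refine Function.Periodic.mem_closure_range_add_nat_mul hT (hucont.const_smul ρs)
    (fun t => by simp [hper]) ?_ s t
  rwa [div_mul_eq_mul_div, div_div]

/-- Quasi-periodic positive solutions of the seasonal system. If the
autonomous Lotka–Volterra system has a positive `T`-periodic solution `u` and
`(rω)/(bT)` is irrational, then through each point `ρ* • u s` there is a solution `v` of
the seasonal system (death phase on each `(kω, kω + (1-φ)ω)`, Lotka–Volterra phase on
each `(kω + (1-φ)ω, (k+1)ω)`) with `v (kω) = ρ* • u (s + k (r/b) ω)` for all `k ∈ ℕ`,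
and the set `{v (kω) : k ∈ ℕ}` is dense in the scaled curve `ρ* • (range u)`. -/
theorem stmt_12 (φ ω μ b r ρs : ℝ)
    (hφ0 : 0 < φ) (hφ1 : φ < 1) (hω : 0 < ω) (hμ : 0 < μ) (hb : 0 < b)
    (hr : r = b * φ - μ * (1 - φ)) (hrpos : 0 < r)
    (hρs : ρs = (1 - Real.exp (μ * (1 - φ) * ω - b * φ * ω)) /
      (1 - Real.exp (-(b * φ * ω))))
    (A : Matrix (Fin 3) (Fin 3) ℝ) (u : ℝ → Fin 3 → ℝ) (T : ℝ) (hT : 0 < T)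
    (hu : ∀ t : ℝ, ∀ i : Fin 3,
      HasDerivAt (fun s => u s i) (u t i * (b - ∑ j : Fin 3, A i j * u t j)) t)
    (hper : ∀ t : ℝ, u (t + T) = u t)
    (hpos : ∀ t : ℝ, ∀ i : Fin 3, 0 < u t i)
    (hirr : Irrational (r * ω / (b * T))) :
    ∀ s : ℝ, ∃ v : ℝ → Fin 3 → ℝ,
      ContinuousOn v (Set.Ici 0) ∧
      (∀ i : Fin 3, v 0 i = ρs * u s i) ∧
      (∀ k : ℕ, ∀ t ∈ Set.Ioo ((k : ℝ) * ω) ((k : ℝ) * ω + (1 - φ) * ω), ∀ i : Fin 3,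
        HasDerivAt (fun τ => v τ i) (-μ * v t i) t) ∧
      (∀ k : ℕ, ∀ t ∈ Set.Ioo ((k : ℝ) * ω + (1 - φ) * ω) (((k : ℝ) + 1) * ω), ∀ i : Fin 3,
        HasDerivAt (fun τ => v τ i) (v t i * (b - ∑ j : Fin 3, A i j * v t j)) t) ∧
      (∀ k : ℕ, ∀ i : Fin 3, v ((k : ℝ) * ω) i = ρs * u (s + (k : ℝ) * (r / b * ω)) i) ∧
      (∀ t : ℝ, (fun i : Fin 3 => ρs * u t i) ∈
        closure (Set.range fun k : ℕ => v ((k : ℝ) * ω))) :=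
  stmt_12_general φ ω μ b r ρs hφ0 hφ1 hω hμ hb hr hrpos hρs A u T hT hu hper hirr
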